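/- The parametric QP optimizer is continuous in the parameter on the interior of its domain under strict feasibility: if H is positive definite and xₖ → x in X with U*(xₖ), U*(x) the unique optimizers, and if the feasible set at x has nonempty interior, then U*(xₖ) → U*(x). -/

import Mathlib

/-!
The optimizers `U*(xₖ)` eventually lie in a bounded sublevel set: the Slater point `U₀` is
feasible at `xₖ` for large `k`, so `V(xₖ, U*(xₖ)) ≤ V(xₖ, U₀)`, and `H` is coercive. By
Bolzano–Weierstrass every subsequence has a convergent further subsequence. Its limit is
feasible at `x` because the graph of the feasible-set map is closed, and optimal at `x` because
every feasible point at `x` is a limit of strictly feasible ones (move towards `U₀`), which stay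
feasible at all parameters near `x`. Strict convexity makes the optimizer at `x` unique, so every
such limit is `U*(x)`.
-/

open Matrix Filter Topology Set Function Bornology

theorem mem_and_isMinOn_of_tendsto {α X E : Type*} [TopologicalSpace X] [TopologicalSpace E]
    {f : X → E → ℝ} (hf : Continuous (uncurry f))
    {S : X → Set E} (hS : IsClosed {p : X × E | p.2 ∈ S p.1}) {x : X}
    (hSx : S x ⊆ closure {W | ∀ᶠ y in 𝓝 x, W ∈ S y})
    {l : Filter α} [l.NeBot] {y : α → X} {U : α → E} {Ubar : E}
    (hy : Tendsto y l (𝓝 x)) (hU : Tendsto U l (𝓝 Ubar))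
    (hmem : ∀ k, U k ∈ S (y k)) (hmin : ∀ k, IsMinOn (f (y k)) (S (y k)) (U k)) :
    Ubar ∈ S x ∧ IsMinOn (f x) (S x) Ubar := by
  have hyU : Tendsto (fun k => (y k, U k)) l (𝓝 (x, Ubar)) := hy.prodMk_nhds hU
  refine ⟨hS.mem_of_tendsto hyU (Eventually.of_forall hmem), isMinOn_iff.2 fun W hW => ?_⟩
  have hle : ∀ W' ∈ {W | ∀ᶠ y in 𝓝 x, W ∈ S y}, f x Ubar ≤ f x W' := fun W' hW' =>
    le_of_tendsto_of_tendsto ((hf.tendsto _).comp hyU)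
      ((hf.tendsto (x, W')).comp (hy.prodMk_nhds tendsto_const_nhds))
      ((hy.eventually hW').mono fun k hk => hmin k hk)
  exact closure_minimal hle (isClosed_le continuous_const (hf.comp (Continuous.prodMk_right x)))
    (hSx hW)

theorem subset_closure_setOf_forall_lt {ι E : Type*} [TopologicalSpace E] [AddCommGroup E]
    [Module ℝ E] [ContinuousAdd E] [ContinuousSMul ℝ E] {g : ι → E → ℝ} {r : ι → ℝ}
    (hg : ∀ i, ConvexOn ℝ univ (g i)) {U₀ : E} (hU₀ : ∀ i, g i U₀ < r i) :
    {W | ∀ i, g i W ≤ r i} ⊆ closure {W | ∀ i, g i W < r i} := by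
  intro W hW
  have hpath : Tendsto (fun t : ℝ => (1 - t) • W + t • U₀) (𝓝[>] 0) (𝓝 W) :=
    ((by fun_prop : Continuous fun t : ℝ => (1 - t) • W + t • U₀).tendsto' 0 W
      (by simp)).mono_left nhdsWithin_le_nhds
  refine mem_closure_of_tendsto hpath ?_
  filter_upwards [Ioo_mem_nhdsGT one_pos] with t ⟨ht0, ht1⟩ i
  have hconv := (hg i).2 (mem_univ W) (mem_univ U₀) (sub_nonneg.2 ht1.le) ht0.le
    (sub_add_cancel 1 t)
  simp only [smul_eq_mul] at hconv
  nlinarith [hW i, hU₀ i]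

namespace Matrix

variable {m : Type*} [Fintype m] {H : Matrix m m ℝ}

theorem PosDef.strictConvexOn_half_dotProduct_mulVec_add (hH : H.PosDef) (z : m → ℝ) :
    StrictConvexOn ℝ univ fun U => (1 / 2) * (U ⬝ᵥ H *ᵥ U) + U ⬝ᵥ z := by
  refine ⟨convex_univ, fun u _ v _ huv a b ha hb hab => ?_⟩
  obtain rfl : b = 1 - a := by linarith
  have hpos := hH.dotProduct_mulVec_pos (sub_ne_zero.2 huv)
  simp only [mulVec_add, mulVec_sub, mulVec_smul, dotProduct_add, add_dotProduct,
    dotProduct_sub, sub_dotProduct, dotProduct_smul, smul_dotProduct, smul_eq_mul,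
    star_trivial] at hpos ⊢
  nlinarith [mul_pos ha hb]

theorem PosDef.exists_pos_mul_sq_norm_le (hH : H.PosDef) :
    ∃ c > 0, ∀ v : m → ℝ, c * ‖v‖ ^ 2 ≤ v ⬝ᵥ H *ᵥ v := by
  have hq : Continuous fun v : m → ℝ => v ⬝ᵥ H *ᵥ v := by fun_prop
  obtain ⟨c, hc, hcS⟩ := (isCompact_sphere (0 : m → ℝ) 1).exists_forall_le' hq.continuousOn
    fun v hv => hH.dotProduct_mulVec_pos (ne_zero_of_mem_unit_sphere ⟨v, hv⟩)
  refine ⟨c, hc, fun v => ?_⟩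
  rcases eq_or_ne v 0 with rfl | hv
  · simp
  have hnv : 0 < ‖v‖ := norm_pos_iff.2 hv
  have hS := hcS (‖v‖⁻¹ • v) (by simp [norm_smul, hnv.ne'])
  simp only [mulVec_smul, dotProduct_smul, smul_dotProduct, smul_eq_mul] at hS
  calc c * ‖v‖ ^ 2 ≤ ‖v‖⁻¹ * (‖v‖⁻¹ * (v ⬝ᵥ H *ᵥ v)) * ‖v‖ ^ 2 := by gcongr
    _ = v ⬝ᵥ H *ᵥ v := by field_simp

theorem abs_dotProduct_le (u v : m → ℝ) : |u ⬝ᵥ v| ≤ Fintype.card m * ‖u‖ * ‖v‖ :=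
  calc |u ⬝ᵥ v| ≤ ∑ i, |u i| * |v i| := by
        simpa only [dotProduct, abs_mul] using
          Finset.abs_sum_le_sum_abs (fun i => u i * v i) Finset.univ
    _ ≤ ∑ _i : m, ‖u‖ * ‖v‖ := by
        gcongr with i
        exacts [norm_le_pi_norm u i, norm_le_pi_norm v i]
    _ = Fintype.card m * ‖u‖ * ‖v‖ := by simp [mul_assoc]

theorem PosDef.isBounded_sublevel (hH : H.PosDef) {Z : Set (m → ℝ)} (hZ : IsBounded Z)
    (b : ℝ) : IsBounded {U | ∃ z ∈ Z, (1 / 2) * (U ⬝ᵥ H *ᵥ U) + U ⬝ᵥ z ≤ b} := by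
  obtain ⟨c, hc, hcoer⟩ := hH.exists_pos_mul_sq_norm_le
  obtain ⟨M, hM⟩ := hZ.exists_norm_le
  set K := Fintype.card m * M
  rw [isBounded_iff_forall_norm_le]
  refine ⟨max 1 ((2 * |b| + 2 * K) / c), fun U ⟨z, hz, hU⟩ => ?_⟩
  have hlin : |U ⬝ᵥ z| ≤ K * ‖U‖ :=
    calc |U ⬝ᵥ z| ≤ Fintype.card m * ‖U‖ * ‖z‖ := abs_dotProduct_le U z
      _ ≤ Fintype.card m * ‖U‖ * M := by gcongr; exact hM z hz
      _ = K * ‖U‖ := by ring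
  have hquad : c * ‖U‖ ^ 2 ≤ 2 * |b| + 2 * K * ‖U‖ := by
    linarith [hcoer U, le_abs_self b, neg_abs_le (U ⬝ᵥ z)]
  rcases le_or_gt ‖U‖ 1 with h1 | h1
  · exact h1.trans (le_max_left _ _)
  · refine le_max_of_le_right ((le_div_iff₀ hc).2 ?_)
    nlinarith [abs_nonneg b]

end Matrix

section QuadraticProgram

variable {ι m n : Type*} [Fintype m] [Fintype n]

def qpFeasibleSet (G : Matrix ι m ℝ) (w : ι → ℝ) (E : Matrix ι n ℝ) (y : n → ℝ) :
    Set (m → ℝ) :=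
  {U | ∀ i, (G *ᵥ U) i ≤ w i + (E *ᵥ y) i}

variable (G : Matrix ι m ℝ) (w : ι → ℝ) (E : Matrix ι n ℝ)

theorem convex_qpFeasibleSet (y : n → ℝ) : Convex ℝ (qpFeasibleSet G w E y) := by
  simp only [qpFeasibleSet, ofPred_forall]
  exact convex_iInter fun i => convex_halfSpace_le (LinearMap.proj i ∘ₗ G.mulVecLin).isLinear _

theorem isClosed_setOf_mem_qpFeasibleSet :
    IsClosed {p : (n → ℝ) × (m → ℝ) | p.2 ∈ qpFeasibleSet G w E p.1} := by
  simp only [qpFeasibleSet, mem_ofPred_eq]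
  rw [ofPred_forall]
  exact isClosed_iInter fun i => isClosed_le (by fun_prop) (by fun_prop)

theorem eventually_mem_qpFeasibleSet [Finite ι] {x : n → ℝ} {W : m → ℝ}
    (hW : ∀ i, (G *ᵥ W) i < w i + (E *ᵥ x) i) :
    ∀ᶠ y in 𝓝 x, W ∈ qpFeasibleSet G w E y :=
  eventually_all.2 fun i => (continuousAt_const.eventually_lt
    (by fun_prop : Continuous fun y => w i + (E *ᵥ y) i).continuousAt (hW i)).mono
    fun _ h => h.le

theorem qpFeasibleSet_subset_closure [Finite ι] {x : n → ℝ} {U₀ : m → ℝ}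
    (hU₀ : ∀ i, (G *ᵥ U₀) i < w i + (E *ᵥ x) i) :
    qpFeasibleSet G w E x ⊆ closure {W | ∀ᶠ y in 𝓝 x, W ∈ qpFeasibleSet G w E y} :=
  (subset_closure_setOf_forall_lt
      (fun i => (LinearMap.proj i ∘ₗ G.mulVecLin).convexOn convex_univ) hU₀).trans
    (closure_mono fun _ hW => eventually_mem_qpFeasibleSet G w E hW)

end QuadraticProgram

/-- Continuity of the parametric QP optimizer under strict feasibility: if
`xₖ → x`, the optimizers `U*(xₖ)` converge to `U*(x)`. -/
theorem parametric_qp_optimizer_continuous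
    (n d q : ℕ)
    (H : Matrix (Fin d) (Fin d) ℝ) (hH : H.PosDef)
    (F : Matrix (Fin d) (Fin n) ℝ)
    (G : Matrix (Fin q) (Fin d) ℝ) (w : Fin q → ℝ) (E : Matrix (Fin q) (Fin n) ℝ)
    (V : (Fin n → ℝ) → (Fin d → ℝ) → ℝ)
    (hV : V = fun x U => (1/2) * (U ⬝ᵥ H *ᵥ U) + U ⬝ᵥ F *ᵥ x)
    (xseq : ℕ → (Fin n → ℝ)) (x : Fin n → ℝ)
    (hx : Tendsto xseq atTop (nhds x))
    (Useq : ℕ → (Fin d → ℝ)) (Ustar : Fin d → ℝ)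
    (hUseqFeas : ∀ k i, (G *ᵥ Useq k) i ≤ w i + (E *ᵥ xseq k) i)
    (hUseqOpt : ∀ k (U : Fin d → ℝ),
      (∀ i, (G *ᵥ U) i ≤ w i + (E *ᵥ xseq k) i) → V (xseq k) (Useq k) ≤ V (xseq k) U)
    (hUstarFeas : ∀ i, (G *ᵥ Ustar) i ≤ w i + (E *ᵥ x) i)
    (hUstarOpt : ∀ U : Fin d → ℝ,
      (∀ i, (G *ᵥ U) i ≤ w i + (E *ᵥ x) i) → V x Ustar ≤ V x U)
    (hSlater : ∃ U0 : Fin d → ℝ, ∀ i, (G *ᵥ U0) i < w i + (E *ᵥ x) i) :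
    Tendsto Useq atTop (nhds Ustar) := by
  subst hV
  obtain ⟨U₀, hU₀⟩ := hSlater
  have hVcont : Continuous (uncurry fun x U => (1/2) * (U ⬝ᵥ H *ᵥ U) + U ⬝ᵥ F *ᵥ x) := by
    fun_prop
  have hsublevel : ∀ᶠ k in atTop, Useq k ∈
      {U | ∃ z ∈ range (F *ᵥ xseq ·),
        (1 / 2) * (U ⬝ᵥ H *ᵥ U) + U ⬝ᵥ z ≤ (1/2) * (U₀ ⬝ᵥ H *ᵥ U₀) + U₀ ⬝ᵥ F *ᵥ x + 1} := by
    filter_upwards [hx.eventually (eventually_mem_qpFeasibleSet G w E hU₀),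
      hx.eventually ((hVcont.comp (Continuous.prodMk_left U₀)).continuousAt.eventually_lt
        continuousAt_const (lt_add_one _))] with k hfeas hlt
    exact ⟨_, mem_range_self k, (hUseqOpt k U₀ hfeas).trans hlt.le⟩
  have hZ : IsBounded (range (F *ᵥ xseq ·)) :=
    Metric.isBounded_range_of_tendsto _ (((by fun_prop : Continuous (F *ᵥ ·)).tendsto x).comp hx)
  refine tendsto_of_subseq_tendsto fun ns hns => ?_
  obtain ⟨a, -, φ, hφ, ha⟩ := tendsto_subseq_of_frequently_bounded (hH.isBounded_sublevel hZ _)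
    (hns.eventually hsublevel).frequently
  obtain ⟨haP, hamin⟩ := mem_and_isMinOn_of_tendsto hVcont
    (isClosed_setOf_mem_qpFeasibleSet G w E) (qpFeasibleSet_subset_closure G w E hU₀)
    (hx.comp (hns.comp hφ.tendsto_atTop)) ha (fun _ => hUseqFeas _)
    (fun _ => isMinOn_iff.2 (hUseqOpt _))
  have hstrict := (hH.strictConvexOn_half_dotProduct_mulVec_add (F *ᵥ x)).subset (subset_univ _)
    (convex_qpFeasibleSet G w E x)
  exact ⟨φ, hstrict.eq_of_isMinOn hamin (isMinOn_iff.2 hUstarOpt) haP hUstarFeas ▸ ha⟩
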